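/- Let H ⊆ F be complete sub-σ-algebras of a complete probability space, let X be an F-measurable ℝ^d-valued random variable whose conditional support supp_H X(ω) is nonempty for all ω, and let h : Ω × ℝ^d → ℝ be H ⊗ B(ℝ^d)-measurable and lower semicontinuous in its second variable. Then esssup_H h(·, X(·)) = sup_{x ∈ supp_H X} h(·, x) almost surely. -/

import Mathlib

open MeasureTheory Set Filter
open scoped Classical

noncomputable section

/-- Scalar product on `ℝ^d`. -/
def dotp {d : ℕ} (a b : Fin d → ℝ) : ℝ := ∑ i, a i * b i

/-- `κ` is a regular version of the conditional law of `X` knowing the σ-algebra `H`. -/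
structure CondLaw {Ω : Type*} (H : MeasurableSpace Ω) {mΩ : MeasurableSpace Ω}
    (μ : Measure Ω) {E : Type*} [MeasurableSpace E] (X : Ω → E) (κ : Ω → Measure E) :
    Prop where
  isProb : ∀ ω, IsProbabilityMeasure (κ ω)
  meas : ∀ A : Set E, MeasurableSet A → Measurable[H] fun ω => κ ω A
  law : ∀ A : Set E, MeasurableSet A → ∀ B : Set Ω, MeasurableSet[H] B →
    ∫⁻ ω in B, κ ω A ∂μ = μ (B ∩ X ⁻¹' A)

/-- The support of the measure `κ ω`: the intersection of all closed sets of full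
measure (for a regular conditional law this is the conditional support). -/
def condSupp {Ω E : Type*} [TopologicalSpace E] [MeasurableSpace E]
    (κ : Ω → Measure E) (ω : Ω) : Set E :=
  ⋂₀ {A : Set E | IsClosed A ∧ κ ω A = 1}

/-- `γ` is (a version of) the conditional essential supremum of `X` knowing `H`. -/
def IsCondEssSup {Ω : Type*} (H : MeasurableSpace Ω) {mΩ : MeasurableSpace Ω}
    (μ : Measure Ω) (X : Ω → ℝ) (γ : Ω → EReal) : Prop :=
  Measurable[H] γ ∧ (∀ᵐ ω ∂μ, (X ω : EReal) ≤ γ ω) ∧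
    ∀ ζ : Ω → EReal, Measurable[H] ζ → (∀ᵐ ω ∂μ, (X ω : EReal) ≤ ζ ω) →
      ∀ᵐ ω ∂μ, γ ω ≤ ζ ω

/-- `γ` is (a version of) the conditional essential infimum of `X` knowing `H`. -/
def IsCondEssInf {Ω : Type*} (H : MeasurableSpace Ω) {mΩ : MeasurableSpace Ω}
    (μ : Measure Ω) (X : Ω → ℝ) (γ : Ω → EReal) : Prop :=
  Measurable[H] γ ∧ (∀ᵐ ω ∂μ, γ ω ≤ (X ω : EReal)) ∧
    ∀ ζ : Ω → EReal, Measurable[H] ζ → (∀ᵐ ω ∂μ, ζ ω ≤ (X ω : EReal)) →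
      ∀ᵐ ω ∂μ, ζ ω ≤ γ ω

/-- `p` is (a version of) the essential infimum of the family `S` of random variables. -/
def IsEssInfSet {Ω : Type*} {mΩ : MeasurableSpace Ω} (μ : Measure Ω)
    (S : Set (Ω → ℝ)) (p : Ω → EReal) : Prop :=
  Measurable[mΩ] p ∧ (∀ f ∈ S, ∀ᵐ ω ∂μ, p ω ≤ (f ω : EReal)) ∧
    ∀ ζ : Ω → EReal, Measurable[mΩ] ζ → (∀ f ∈ S, ∀ᵐ ω ∂μ, ζ ω ≤ (f ω : EReal)) →
      ∀ᵐ ω ∂μ, ζ ω ≤ p ω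

/-- The set of super-hedging prices of the claim `Z` in the one-period market `(y, Y)`. -/
def Prices {Ω : Type*} (H : MeasurableSpace Ω) {mΩ : MeasurableSpace Ω} (μ : Measure Ω)
    {d : ℕ} (y Y : Ω → Fin d → ℝ) (Z : Ω → ℝ) : Set (Ω → ℝ) :=
  {x | Measurable[H] x ∧ ∃ θ : Ω → Fin d → ℝ, Measurable[H] θ ∧
    ∀ᵐ ω ∂μ, Z ω ≤ x ω + dotp (θ ω) fun i => Y ω i - y ω i}

/-- One-dimensional version of `Prices`. -/
def Prices1 {Ω : Type*} (H : MeasurableSpace Ω) {mΩ : MeasurableSpace Ω} (μ : Measure Ω)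
    (y Y : Ω → ℝ) (Z : Ω → ℝ) : Set (Ω → ℝ) :=
  {x | Measurable[H] x ∧ ∃ θ : Ω → ℝ, Measurable[H] θ ∧
    ∀ᵐ ω ∂μ, Z ω ≤ x ω + θ ω * (Y ω - y ω)}

/-- One-period super-hedging prices of the zero claim in the market extended by the
additional asset `(pZ, Z)`. -/
def PricesExt {Ω : Type*} (H : MeasurableSpace Ω) {mΩ : MeasurableSpace Ω} (μ : Measure Ω)
    {d : ℕ} (y Y : Ω → Fin d → ℝ) (Z pZ : Ω → ℝ) : Set (Ω → ℝ) :=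
  {x | Measurable[H] x ∧ ∃ α : Ω → ℝ, Measurable[H] α ∧ ∃ θ : Ω → Fin d → ℝ,
    Measurable[H] θ ∧
    ∀ᵐ ω ∂μ, 0 ≤ x ω + α ω * (Z ω - pZ ω) + dotp (θ ω) fun i => Y ω i - y ω i}

/-- The function `f = -g + δ_{D}` of the paper, valued in `EReal`. -/
def fObj {Ω : Type*} {d : ℕ} (g : Ω → (Fin d → ℝ) → ℝ) (D : Ω → Set (Fin d → ℝ))
    (ω : Ω) (z : Fin d → ℝ) : EReal :=
  if z ∈ D ω then ((-(g ω z) : ℝ) : EReal) else ⊤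

/-- Fenchel–Legendre conjugate of an `EReal`-valued function on `ℝ^d`. -/
def eConj {d : ℕ} (f : (Fin d → ℝ) → EReal) (x : Fin d → ℝ) : EReal :=
  ⨆ z : Fin d → ℝ, ((dotp x z : ℝ) : EReal) - f z

/-- Convex-analytic indicator function `δ_s`. -/
def indicatorE {E : Type*} (s : Set E) (x : E) : EReal := if x ∈ s then 0 else ⊤

/-- Relative concave envelope of `g` with respect to `D`. -/
def concEnv {d : ℕ} (g : (Fin d → ℝ) → ℝ) (D : Set (Fin d → ℝ)) (x : Fin d → ℝ) : EReal :=
  ⨅ v ∈ {v : (Fin d → ℝ) → ℝ | ConcaveOn ℝ univ v ∧ ∀ z ∈ D, g z ≤ v z}, ((v x : ℝ) : EReal)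

/-- Upper semicontinuous closure of an `EReal`-valued function. -/
def usClosure {E : Type*} [TopologicalSpace E] (F : E → EReal) (x : E) : EReal :=
  Filter.limsup F (nhds x)

/-- The slope `θ^*` of Corollary 2.19, with the conventions of the paper. -/
def thetaStar (g : ℝ → ℝ) (M I : ℝ) (S : EReal) : ℝ :=
  if S = (I : EReal) then 0 else if S = ⊤ then M
  else (g S.toReal - g I) / (S.toReal - I)

/-- Multi-period super-hedging prices at time `t` of the claim `g` paid at time `T`. -/
def PricesMulti {Ω : Type*} {mΩ : MeasurableSpace Ω} (𝓕 : ℕ → MeasurableSpace Ω)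
    (μ : Measure Ω) {d : ℕ} (S : ℕ → Ω → Fin d → ℝ) (t T : ℕ) (g : Ω → ℝ) :
    Set (Ω → ℝ) :=
  {x | Measurable[𝓕 t] x ∧ ∃ θ : ℕ → Ω → Fin d → ℝ, (∀ u, Measurable[𝓕 u] (θ u)) ∧
    ∃ ε : Ω → ℝ, Measurable[𝓕 T] ε ∧ (∀ᵐ ω ∂μ, 0 ≤ ε ω) ∧
    ∀ᵐ ω ∂μ, x ω + (∑ u ∈ Finset.Icc (t+1) T,
      dotp (θ (u-1) ω) fun i => S u ω i - S (u-1) ω i) - ε ω = g ω}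

/-- One-step super-hedging prices at time `t` of the (extended-real) claim `G`
paid at time `t+1`. -/
def OneStepPrices {Ω : Type*} {mΩ : MeasurableSpace Ω} (𝓕 : ℕ → MeasurableSpace Ω)
    (μ : Measure Ω) {d : ℕ} (S : ℕ → Ω → Fin d → ℝ) (t : ℕ) (G : Ω → EReal) :
    Set (Ω → ℝ) :=
  {x | Measurable[𝓕 t] x ∧ ∃ θ : Ω → Fin d → ℝ, Measurable[𝓕 t] θ ∧
    ∀ᵐ ω ∂μ, G ω ≤ ((x ω + dotp (θ ω) fun i => S (t+1) ω i - S t ω i : ℝ) : EReal)}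

/-- Multi-period super-hedging prices in the market extended by the additional asset `C`. -/
def PricesMultiExt {Ω : Type*} {mΩ : MeasurableSpace Ω} (𝓕 : ℕ → MeasurableSpace Ω)
    (μ : Measure Ω) {d : ℕ} (S : ℕ → Ω → Fin d → ℝ) (C : ℕ → Ω → ℝ) (t T : ℕ)
    (g : Ω → ℝ) : Set (Ω → ℝ) :=
  {x | Measurable[𝓕 t] x ∧ ∃ θ : ℕ → Ω → Fin d → ℝ, (∀ u, Measurable[𝓕 u] (θ u)) ∧
    ∃ α : ℕ → Ω → ℝ, (∀ u, Measurable[𝓕 u] (α u)) ∧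
    ∃ ε : Ω → ℝ, Measurable[𝓕 T] ε ∧ (∀ᵐ ω ∂μ, 0 ≤ ε ω) ∧
    ∀ᵐ ω ∂μ, x ω + (∑ u ∈ Finset.Icc (t+1) T,
      ((dotp (θ (u-1) ω) fun i => S u ω i - S (u-1) ω i) +
        α (u-1) ω * (C u ω - C (u-1) ω))) - ε ω = g ω}

/-- The set `R_t^T` of claims super-replicable at zero cost, one-dimensional case. -/
def RsetM {Ω : Type*} {mΩ : MeasurableSpace Ω} (𝓕 : ℕ → MeasurableSpace Ω)
    (μ : Measure Ω) (S : ℕ → Ω → ℝ) (t T : ℕ) : Set (Ω → ℝ) :=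
  {X | ∃ θ : ℕ → Ω → ℝ, (∀ u, Measurable[𝓕 u] (θ u)) ∧
    ∃ ε : Ω → ℝ, Measurable[𝓕 T] ε ∧ (∀ᵐ ω ∂μ, 0 ≤ ε ω) ∧
    ∀ᵐ ω ∂μ, X ω = (∑ u ∈ Finset.Icc (t+1) T, θ (u-1) ω * (S u ω - S (u-1) ω)) - ε ω}

/-- Closure with respect to convergence in probability. -/
def closureP {Ω : Type*} {mΩ : MeasurableSpace Ω} (μ : Measure Ω) (A : Set (Ω → ℝ)) :
    Set (Ω → ℝ) :=
  {X | ∃ f : ℕ → Ω → ℝ, (∀ n, f n ∈ A) ∧ TendstoInMeasure μ f Filter.atTop X}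

/-! Since `h(ω, ·)` is lower semicontinuous, the supremum of `h(ω, ·)` over the support of `κ ω`
is at most `c` exactly when `κ ω {h(ω, ·) > c} = 0`; this makes the supremum `H`-measurable.
The law of `ω ↦ (ω, X ω)` on `H ⊗ 𝓑(ℝ^d)` is `μ|_H ⊗ κ`, so a property of `(ω, X ω)` holds
`μ`-a.s. iff, for `μ`-a.e. `ω`, it holds `κ ω`-a.s. Hence `X` lies a.s. in its conditional
support, which bounds `esssup_H` by the supremum, and `κ ω {h(ω, ·) > γ ω} = 0` a.s., which
gives the converse inequality. -/

open ProbabilityTheory TopologicalSpace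

section Support

variable {E : Type*} [TopologicalSpace E] [MeasurableSpace E]

lemma condSupp_eq_support [OpensMeasurableSpace E] {Ω : Type*} {κ : Ω → Measure E} {ω : Ω}
    [IsProbabilityMeasure (κ ω)] : condSupp κ ω = (κ ω).support := by
  rw [condSupp, Measure.support_eq_sInter]
  congr 1
  ext A
  exact and_congr_right fun hA => (prob_compl_eq_zero_iff hA.measurableSet).symm

lemma sSup_image_support_le_iff [HereditarilyLindelofSpace E] {ν : Measure E} {f : E → ℝ}
    (hf : LowerSemicontinuous f) {c : EReal} :
    sSup ((fun x => (f x : EReal)) '' ν.support) ≤ c ↔ ν {x | c < f x} = 0 := by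
  have hopen : IsOpen {x | c < f x} :=
    (continuous_coe_real_ereal.comp_lowerSemicontinuous hf fun _ _ => EReal.coe_le_coe)
      |>.isOpen_preimage c
  constructor
  · intro hle
    by_contra hpos
    obtain ⟨x, hcx, hx⟩ := Measure.nonempty_inter_support_of_pos (pos_iff_ne_zero.2 hpos)
    exact (hle.trans_lt hcx).not_ge (le_sSup (mem_image_of_mem _ hx))
  · intro hnull
    refine sSup_le ?_
    rintro _ ⟨x, hx, rfl⟩
    by_contra! hcx
    exact ((Measure.mem_support_iff_forall x).1 hx _ (hopen.mem_nhds hcx)).ne' hnull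

end Support

namespace ProbabilityTheory.Kernel

variable {α E : Type*} {mα : MeasurableSpace α} [TopologicalSpace E] [MeasurableSpace E]

lemma measurableSet_setOf_mem_support [OpensMeasurableSpace E] [SecondCountableTopology E]
    (κ : Kernel α E) :
    MeasurableSet {p : α × E | p.2 ∈ (κ p.1).support} := by
  have hcompl : {p : α × E | p.2 ∈ (κ p.1).support}ᶜ =
      ⋃ U ∈ countableBasis E, {a | κ a U = 0} ×ˢ U := by
    ext ⟨a, x⟩
    simp only [mem_compl_iff, mem_ofPred_eq, mem_iUnion, mem_prod, exists_prop,
      (isBasis_countableBasis E).nhds_hasBasis.notMem_measureSupport, and_assoc]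
    exact exists_congr fun U => and_congr_right fun _ => and_comm
  rw [← compl_compl {p : α × E | p.2 ∈ (κ p.1).support}, hcompl]
  refine .compl (.biUnion (countable_countableBasis E) fun U hU => ?_)
  have hUm := (isOpen_of_mem_countableBasis hU).measurableSet
  exact (κ.measurable_coe hUm (measurableSet_singleton 0)).prod hUm

lemma measurable_sSup_image_support [HereditarilyLindelofSpace E] (κ : Kernel α E)
    [IsSFiniteKernel κ] {f : α → E → ℝ} (hf : Measurable fun p : α × E => f p.1 p.2)
    (hlsc : ∀ a, LowerSemicontinuous (f a)) :
    Measurable fun a => sSup ((fun x => (f a x : EReal)) '' (κ a).support) := by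
  refine measurable_of_Iic fun c => ?_
  have hC : MeasurableSet {p : α × E | c < f p.1 p.2} :=
    measurableSet_lt measurable_const (measurable_coe_real_ereal.comp hf)
  simp only [preimage, mem_Iic, sSup_image_support_le_iff (hlsc _)]
  exact κ.measurable_kernel_prodMk_left hC (measurableSet_singleton 0)

end ProbabilityTheory.Kernel

namespace CondLaw

variable {Ω E : Type*} [MeasurableSpace E] {H : MeasurableSpace Ω} [mΩ : MeasurableSpace Ω]
  {μ : Measure Ω} {X : Ω → E} {κ : Ω → Measure E}

def kernel (hκ : CondLaw H μ X κ) : @Kernel Ω E H _ :=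
  @Kernel.mk Ω E H _ κ (@Measure.measurable_of_measurable_coe E Ω _ H κ hκ.meas)

instance isMarkovKernel_kernel (hκ : CondLaw H μ X κ) : @IsMarkovKernel Ω E H _ hκ.kernel :=
  @IsMarkovKernel.mk Ω E H _ hκ.kernel hκ.isProb

lemma compProd_trim_eq_map (hκ : CondLaw H μ X κ) (hHF : H ≤ mΩ) [IsFiniteMeasure μ]
    (hX : Measurable X) :
    @Measure.compProd Ω E H _ (μ.trim hHF) hκ.kernel =
      @Measure.map Ω (Ω × E) mΩ (H.prod ‹_›) (fun ω => (ω, X ω)) μ := by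
  have hgraph : Measurable[mΩ, H.prod ‹_›] fun ω => (ω, X ω) :=
    (measurable_id'' hHF).prodMk hX
  refine @Measure.ext_prod Ω E H _ _ _ _ fun {B A} hB hA => ?_
  rw [@Measure.compProd_apply_prod Ω E H _ _ _ _ _ B A hB hA,
    Measure.map_apply hgraph (hB.prod hA), restrict_trim hHF μ hB]
  exact (lintegral_trim hHF (hκ.meas A hA)).trans (hκ.law A hA B hB)

lemma lintegral_measure_prodMk_left (hκ : CondLaw H μ X κ) (hHF : H ≤ mΩ)
    [IsFiniteMeasure μ] (hX : Measurable X) {C : Set (Ω × E)}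
    (hC : MeasurableSet[H.prod ‹_›] C) :
    ∫⁻ ω, κ ω (Prod.mk ω ⁻¹' C) ∂μ = μ ((fun ω => (ω, X ω)) ⁻¹' C) := by
  have hgraph : Measurable[mΩ, H.prod ‹_›] fun ω => (ω, X ω) :=
    (measurable_id'' hHF).prodMk hX
  rw [← Measure.map_apply hgraph hC, ← hκ.compProd_trim_eq_map hHF hX,
    @Measure.compProd_apply Ω E H _ _ _ _ _ _ hC]
  exact (lintegral_trim hHF (hκ.kernel.measurable_kernel_prodMk_left hC)).symm

lemma ae_prodMk_mem_iff (hκ : CondLaw H μ X κ) (hHF : H ≤ mΩ) [IsFiniteMeasure μ]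
    (hX : Measurable X) {C : Set (Ω × E)} (hC : MeasurableSet[H.prod ‹_›] C) :
    (∀ᵐ ω ∂μ, (ω, X ω) ∈ C) ↔ ∀ᵐ ω ∂μ, ∀ᵐ x ∂κ ω, (ω, x) ∈ C := by
  have hmeas : Measurable fun ω => κ ω (Prod.mk ω ⁻¹' Cᶜ) :=
    (hκ.kernel.measurable_kernel_prodMk_left hC.compl).mono hHF le_rfl
  rw [ae_iff, show {ω | (ω, X ω) ∉ C} = (fun ω => (ω, X ω)) ⁻¹' Cᶜ from rfl,
    ← hκ.lintegral_measure_prodMk_left hHF hX hC.compl, lintegral_eq_zero_iff hmeas]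
  rfl

end CondLaw

theorem condEssSup_eq_sup_condSupp_general
    {Ω : Type*} (H : MeasurableSpace Ω) [mΩ : MeasurableSpace Ω] (μ : Measure Ω)
    [IsProbabilityMeasure μ] (hHF : H ≤ mΩ)
    {d : ℕ} (X : Ω → Fin d → ℝ) (hX : Measurable[mΩ] X)
    (κ : Ω → Measure (Fin d → ℝ)) (hκ : CondLaw H μ X κ)
    (h : Ω → (Fin d → ℝ) → ℝ)
    (hmeas : Measurable[H.prod inferInstance] fun p : Ω × (Fin d → ℝ) => h p.1 p.2)
    (hlsc : ∀ ω, LowerSemicontinuous (h ω))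
    (γ : Ω → EReal) (hγ : IsCondEssSup H μ (fun ω => h ω (X ω)) γ) :
    ∀ᵐ ω ∂μ, γ ω = sSup ((fun x => ((h ω x : ℝ) : EReal)) '' condSupp κ ω) := by
  obtain ⟨hγ_meas, hγ_ge, hγ_min⟩ := hγ
  have hsupp ω : condSupp κ ω = (κ ω).support := have := hκ.isProb ω; condSupp_eq_support
  simp only [hsupp]
  have hX_mem : ∀ᵐ ω ∂μ, X ω ∈ (κ ω).support :=
    (hκ.ae_prodMk_mem_iff hHF hX hκ.kernel.measurableSet_setOf_mem_support).2
      (ae_of_all _ fun ω => (κ ω).support_mem_ae)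
  have hγ_le_sup := hγ_min _ (hκ.kernel.measurable_sSup_image_support hmeas hlsc)
    (hX_mem.mono fun ω hω => le_sSup (mem_image_of_mem _ hω))
  have hC : MeasurableSet[H.prod inferInstance]
      {p : Ω × (Fin d → ℝ) | (h p.1 p.2 : EReal) ≤ γ p.1} :=
    measurableSet_le (measurable_coe_real_ereal.comp hmeas) (hγ_meas.comp measurable_fst)
  filter_upwards [hγ_le_sup, (hκ.ae_prodMk_mem_iff hHF hX hC).1 hγ_ge] with ω hγG hnull
  refine le_antisymm hγG ((sSup_image_support_le_iff (hlsc ω)).2 ?_)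
  simpa [ae_iff] using hnull

/-- the conditional essential supremum of `h(·, X(·))` equals the
supremum of `h(·, x)` over the conditional support of `X`, almost surely. -/
theorem condEssSup_eq_sup_condSupp
    {Ω : Type*} (H : MeasurableSpace Ω) [mΩ : MeasurableSpace Ω] (μ : Measure Ω)
    [IsProbabilityMeasure μ] [μ.IsComplete] (hHF : H ≤ mΩ)
    (hHcomp : ∀ s : Set Ω, μ s = 0 → MeasurableSet[H] s)
    {d : ℕ} (X : Ω → Fin d → ℝ) (hX : Measurable[mΩ] X)
    (κ : Ω → Measure (Fin d → ℝ)) (hκ : CondLaw H μ X κ)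
    (hdom : ∀ ω, (condSupp κ ω).Nonempty)
    (h : Ω → (Fin d → ℝ) → ℝ)
    (hmeas : Measurable[H.prod inferInstance] fun p : Ω × (Fin d → ℝ) => h p.1 p.2)
    (hlsc : ∀ ω, LowerSemicontinuous (h ω))
    (γ : Ω → EReal) (hγ : IsCondEssSup H μ (fun ω => h ω (X ω)) γ) :
    ∀ᵐ ω ∂μ, γ ω = sSup ((fun x => ((h ω x : ℝ) : EReal)) '' condSupp κ ω) :=
  condEssSup_eq_sup_condSupp_general H (mΩ := mΩ) μ hHF X hX κ hκ h hmeas hlsc γ hγ
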